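/- arXiv:1406.3183 — 5 statements merged into one kernel-verified Lean document; each statement's English description precedes it below -/
import Mathlib

section
/- For every λ₀ ∈ (0,1) and every x ∈ ℝ^d, the function λ ↦ log π_λ(x) is differentiable at λ₀ with derivative equal to log ℓ(x) − ∫_{ℝ^d} π_{λ₀}(x') · log ℓ(x') dx'. That is, the pseudo-time derivative of the log bridging density at x equals the log-likelihood at x minus the expected log-likelihood under π_{λ₀}. -/
open MeasureTheory

set_option maxHeartbeats 1000000 in
/-- The pseudo-time derivative of the log bridging density `log π_λ(x)`, where
`π_λ(x) = p(x) ℓ(x)^λ / Z_λ`, equals the log-likelihood at `x` minus the expected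
log-likelihood under `π_{λ₀}`. -/
theorem stmt2 {d : ℕ} (hd : 1 ≤ d)
    (p ℓ : (Fin d → ℝ) → ℝ)
    (hp : ∀ x, 0 < p x) (hℓ : ∀ x, 0 < ℓ x)
    (hpdf : ∫ x, p x = 1)
    (Z : ℝ → ℝ) (hZdef : ∀ l : ℝ, Z l = ∫ x, p x * ℓ x ^ l)
    (hint : ∀ l ∈ Set.Icc (0 : ℝ) 1, Integrable fun x => p x * ℓ x ^ l)
    (hZpos : ∀ l ∈ Set.Icc (0 : ℝ) 1, 0 < Z l)
    (g : (Fin d → ℝ) → ℝ) (hg : ∀ x, 0 ≤ g x) (hgint : Integrable g)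
    (hdom : ∀ l ∈ Set.Icc (0 : ℝ) 1, ∀ x, p x * ℓ x ^ l * |Real.log (ℓ x)| ≤ g x)
    (l₀ : ℝ) (hl₀ : l₀ ∈ Set.Ioo (0 : ℝ) 1) (x : Fin d → ℝ) :
    HasDerivAt (fun l => Real.log (p x * ℓ x ^ l / Z l))
      (Real.log (ℓ x) - ∫ x', p x' * ℓ x' ^ l₀ / Z l₀ * Real.log (ℓ x')) l₀ := by
  obtain ⟨hl0, hl1⟩ := hl₀
  have hl₀Icc : l₀ ∈ Set.Icc (0:ℝ) 1 := ⟨hl0.le, hl1.le⟩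
  -- pointwise derivative of t ↦ p a * ℓ a ^ t
  have hptw : ∀ (a : Fin d → ℝ) (t : ℝ),
      HasDerivAt (fun t => p a * ℓ a ^ t) (p a * ℓ a ^ t * Real.log (ℓ a)) t := by
    intro a t
    have := (Real.hasStrictDerivAt_const_rpow (hℓ a) t).hasDerivAt.const_mul (p a)
    simpa [mul_assoc] using this
  -- measurability of the derivative at l₀
  have hε : (0:ℝ) < min l₀ (1 - l₀) := lt_min hl0 (by linarith)
  have hball : Metric.ball l₀ (min l₀ (1 - l₀)) ⊆ Set.Icc (0:ℝ) 1 := by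
    intro t ht
    rw [Metric.mem_ball, Real.dist_eq] at ht
    have h1 := (abs_lt.mp ht).1
    have h2 := (abs_lt.mp ht).2
    have := min_le_left l₀ (1 - l₀)
    have := min_le_right l₀ (1 - l₀)
    constructor <;> nlinarith
  have hF'meas : AEStronglyMeasurable
      (fun a => p a * ℓ a ^ l₀ * Real.log (ℓ a)) (volume : Measure (Fin d → ℝ)) := by
    set e : ℕ → ℝ := fun n => (1 - l₀) / (n + 1) with he
    have hepos : ∀ n, 0 < e n := fun n => div_pos (by linarith) (by positivity)
    have heIcc : ∀ n, l₀ + e n ∈ Set.Icc (0:ℝ) 1 := by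
      intro n
      have h1 : e n ≤ 1 - l₀ := by
        rw [he]
        rw [div_le_iff₀ (by positivity)]
        nlinarith [Nat.cast_nonneg (α := ℝ) n]
      constructor <;> nlinarith [(hepos n)]
    refine aestronglyMeasurable_of_tendsto_ae (f := fun n a =>
        (p a * ℓ a ^ (l₀ + e n) - p a * ℓ a ^ l₀) / e n) Filter.atTop
      (fun n => (((hint _ (heIcc n)).sub (hint _ hl₀Icc)).div_const _).aestronglyMeasurable) ?_
    refine Filter.Eventually.of_forall (fun a => ?_)
    have hd := (hptw a l₀)
    rw [hasDerivAt_iff_tendsto_slope] at hd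
    have het : Filter.Tendsto (fun n => l₀ + e n) Filter.atTop (nhdsWithin l₀ {l₀}ᶜ) := by
      rw [nhdsWithin]
      refine Filter.tendsto_inf.mpr ⟨?_, ?_⟩
      · have h := tendsto_one_div_add_atTop_nhds_zero_nat.const_mul (1 - l₀)
        rw [mul_zero] at h
        have heto : Filter.Tendsto e Filter.atTop (nhds 0) := by
          refine h.congr fun n => ?_
          rw [he]; field_simp
        simpa using tendsto_const_nhds.add heto
      · refine Filter.tendsto_principal.mpr (Filter.Eventually.of_forall fun n => ?_)
        simp only [Set.mem_compl_iff, Set.mem_singleton_iff]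
        intro h
        exact absurd h (by nlinarith [hepos n])
    have := hd.comp het
    refine this.congr (fun n => ?_)
    simp [slope, Function.comp]
    ring
  -- derivative of Z
  have key := hasDerivAt_integral_of_dominated_loc_of_deriv_le (μ := (volume : Measure (Fin d → ℝ)))
    (F := fun t a => p a * ℓ a ^ t) (F' := fun t a => p a * ℓ a ^ t * Real.log (ℓ a))
    (bound := g) (Metric.ball_mem_nhds l₀ hε)
    (by
      have : Set.Icc (0:ℝ) 1 ∈ nhds l₀ := Icc_mem_nhds hl0 hl1
      exact Filter.eventually_of_mem this fun t ht => (hint t ht).aestronglyMeasurable)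
    (hint l₀ hl₀Icc) hF'meas
    (Filter.Eventually.of_forall fun a t ht => by
      have hpa := hp a
      have hla := hℓ a
      have h1 : 0 ≤ p a * ℓ a ^ t := by positivity
      calc ‖p a * ℓ a ^ t * Real.log (ℓ a)‖ = p a * ℓ a ^ t * |Real.log (ℓ a)| := by
            rw [Real.norm_eq_abs, abs_mul, abs_of_nonneg h1]
        _ ≤ g a := hdom t (hball ht) a)
    hgint
    (Filter.Eventually.of_forall fun a t _ => hptw a t)
  obtain ⟨hF'int, hZderiv⟩ := key
  have hZ0 : Z l₀ ≠ 0 := (hZpos l₀ hl₀Icc).ne'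
  have hZderiv' : HasDerivAt Z (∫ a, p a * ℓ a ^ l₀ * Real.log (ℓ a)) l₀ := by
    have : Z = fun l => ∫ a, p a * ℓ a ^ l := funext hZdef
    rw [this]; exact hZderiv
  -- rewrite the target integral
  have hI : (∫ x', p x' * ℓ x' ^ l₀ / Z l₀ * Real.log (ℓ x'))
      = (∫ a, p a * ℓ a ^ l₀ * Real.log (ℓ a)) / Z l₀ := by
    rw [div_eq_mul_inv, ← integral_mul_const]
    congr 1; ext a; ring
  rw [hI]
  -- the function equals log(p x) + l * log(ℓ x) - log (Z l) near l₀
  have hev : (fun l => Real.log (p x * ℓ x ^ l / Z l))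
      =ᶠ[nhds l₀] fun l => Real.log (p x) + l * Real.log (ℓ x) - Real.log (Z l) := by
    have hZne : ∀ᶠ l in nhds l₀, Z l ≠ 0 :=
      hZderiv'.continuousAt.eventually_ne hZ0
    have hpx := hp x
    have hlx := hℓ x
    filter_upwards [hZne] with l hl
    rw [Real.log_div (by positivity) hl, Real.log_mul (hp x).ne' (by positivity),
      Real.log_rpow (hℓ x)]
  have hmain : HasDerivAt (fun l => Real.log (p x) + l * Real.log (ℓ x) - Real.log (Z l))
      (Real.log (ℓ x) - (∫ a, p a * ℓ a ^ l₀ * Real.log (ℓ a)) / Z l₀) l₀ := by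
    have h1 : HasDerivAt (fun l : ℝ => Real.log (p x) + l * Real.log (ℓ x))
        (Real.log (ℓ x)) l₀ := by
      have := (hasDerivAt_const l₀ (Real.log (p x))).add
        ((hasDerivAt_id l₀).mul_const (Real.log (ℓ x)))
      simp only [zero_add, one_mul] at this
      exact this
    exact h1.sub (hZderiv'.log hZ0)
  exact hmain.congr_of_eventuallyEq hev
end

section
/- (Theorem 1, Fokker–Planck form.) Suppose that for all λ ∈ (0,1) and x ∈ ℝ^d the governing equation holds: log ℓ(x) − ∫ π_λ(x') log ℓ(x') dx' + tr(∂f/∂x (λ,x)) + ⟨∇_x log π_λ(x), f(λ,x)⟩ − tr(Q(λ,x) · ∇²_x log π_λ(x)) − ⟨∇_x log π_λ(x), Q(λ,x) ∇_x log π_λ(x)⟩ − 2 Σ_{i,j} (∂ Q_{ij}/∂x_i)(λ,x) · (∂ log π_λ/∂x_j)(x) − Σ_{i,j} (∂² Q_{ij}/∂x_i ∂x_j)(λ,x) = 0. Then for every λ₀ ∈ (0,1) and x ∈ ℝ^d, the function λ ↦ π_λ(x) is differentiable at λ₀ and its derivative equals the Fokker–Planck right-hand side: −Σ_i ∂/∂x_i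 ( f_i(λ₀, ·) π_{λ₀}(·) )(x) + Σ_{i,j} ∂²/∂x_i ∂x_j ( Q_{ij}(λ₀, ·) π_{λ₀}(·) )(x). -/
open MeasureTheory

/-- Partial derivative in the `i`-th coordinate direction of a function on `ℝ^d`. -/
noncomputable def pdv {d : ℕ} (F : (Fin d → ℝ) → ℝ) (x : Fin d → ℝ) (i : Fin d) : ℝ :=
  fderiv ℝ F x (Pi.single i 1)


lemma pdv_mul {d : ℕ} {F G : (Fin d → ℝ) → ℝ} {x : Fin d → ℝ}
    (hF : DifferentiableAt ℝ F x) (hG : DifferentiableAt ℝ G x) (i : Fin d) :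
    pdv (fun y => F y * G y) x i = pdv F x i * G x + F x * pdv G x i := by
  simp only [pdv, fderiv_fun_mul hF hG, ContinuousLinearMap.add_apply,
    ContinuousLinearMap.smul_apply, smul_eq_mul]
  ring

lemma pdv_add {d : ℕ} {F G : (Fin d → ℝ) → ℝ} {x : Fin d → ℝ}
    (hF : DifferentiableAt ℝ F x) (hG : DifferentiableAt ℝ G x) (i : Fin d) :
    pdv (fun y => F y + G y) x i = pdv F x i + pdv G x i := by
  simp only [pdv, fderiv_fun_add hF hG, ContinuousLinearMap.add_apply]

lemma pdv_log {d : ℕ} {F : (Fin d → ℝ) → ℝ} {x : Fin d → ℝ}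
    (hF : DifferentiableAt ℝ F x) (hFx : F x ≠ 0) (i : Fin d) :
    pdv (fun y => Real.log (F y)) x i = pdv F x i / F x := by
  have h : HasFDerivAt (fun y => Real.log (F y)) ((F x)⁻¹ • fderiv ℝ F x) x :=
    (Real.hasDerivAt_log hFx).comp_hasFDerivAt x hF.hasFDerivAt
  simp only [pdv, h.fderiv, ContinuousLinearMap.smul_apply, smul_eq_mul]
  rw [div_eq_inv_mul]

lemma pdvC1 {d : ℕ} {F : (Fin d → ℝ) → ℝ} (hF : ContDiff ℝ 2 F) (j : Fin d) :
    ContDiff ℝ 1 fun y => pdv F y j := by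
  simp only [pdv]
  exact (ContinuousLinearMap.apply ℝ ℝ (Pi.single j 1)).contDiff.comp
    (hF.fderiv_right (m := 1) (by norm_num))
/-- Theorem 1 (Fokker–Planck form): if the drift `f` and diffusion matrix `Q` satisfy
the governing equation for the geometric bridge `π_λ(x) = p(x) ℓ(x)^λ / Z_λ`, then
`λ ↦ π_λ(x)` is differentiable and its derivative equals the Fokker–Planck right-hand
side `-Σᵢ ∂ᵢ(fᵢ π_λ) + Σᵢⱼ ∂ᵢ∂ⱼ(Qᵢⱼ π_λ)`. -/
theorem stmt3 {d : ℕ} (hd : 1 ≤ d)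
    (p ℓ : (Fin d → ℝ) → ℝ)
    (hp : ∀ x, 0 < p x) (hℓ : ∀ x, 0 < ℓ x)
    (hpC2 : ContDiff ℝ 2 p) (hℓC2 : ContDiff ℝ 2 ℓ)
    (hpdf : ∫ x, p x = 1)
    (Z : ℝ → ℝ) (hZdef : ∀ l : ℝ, Z l = ∫ x, p x * ℓ x ^ l)
    (hint : ∀ l ∈ Set.Icc (0 : ℝ) 1, Integrable fun x => p x * ℓ x ^ l)
    (hZpos : ∀ l ∈ Set.Icc (0 : ℝ) 1, 0 < Z l)
    (g : (Fin d → ℝ) → ℝ) (hg : ∀ x, 0 ≤ g x) (hgint : Integrable g)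
    (hdom : ∀ l ∈ Set.Icc (0 : ℝ) 1, ∀ x, p x * ℓ x ^ l * |Real.log (ℓ x)| ≤ g x)
    (pi' : ℝ → (Fin d → ℝ) → ℝ)
    (hpi : ∀ l x, pi' l x = p x * ℓ x ^ l / Z l)
    (f : ℝ → (Fin d → ℝ) → (Fin d → ℝ))
    (hf : ∀ l ∈ Set.Icc (0 : ℝ) 1, ContDiff ℝ 1 (f l))
    (Q : ℝ → (Fin d → ℝ) → Matrix (Fin d) (Fin d) ℝ)
    (hQsymm : ∀ l x, (Q l x).IsSymm)
    (hQ : ∀ l ∈ Set.Icc (0 : ℝ) 1, ∀ i j, ContDiff ℝ 2 fun x => Q l x i j)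
    -- the governing equation
    (hgov : ∀ l ∈ Set.Ioo (0 : ℝ) 1, ∀ x,
      Real.log (ℓ x) - (∫ x', pi' l x' * Real.log (ℓ x')) +
        (∑ i, pdv (fun x' => f l x' i) x i) +
        (∑ i, pdv (fun x' => Real.log (pi' l x')) x i * f l x i) -
        (∑ i, ∑ j, Q l x i j *
          pdv (fun x' => pdv (fun x'' => Real.log (pi' l x'')) x' i) x j) -
        (∑ i, ∑ j, pdv (fun x' => Real.log (pi' l x')) x i * Q l x i j *
          pdv (fun x' => Real.log (pi' l x')) x j) -
        2 * (∑ i, ∑ j, pdv (fun x' => Q l x' i j) x i *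
          pdv (fun x' => Real.log (pi' l x')) x j) -
        (∑ i, ∑ j, pdv (fun x' => pdv (fun x'' => Q l x'' i j) x' j) x i) = 0)
    (l₀ : ℝ) (hl₀ : l₀ ∈ Set.Ioo (0 : ℝ) 1) (x : Fin d → ℝ) :
    HasDerivAt (fun l => pi' l x)
      (-(∑ i, pdv (fun x' => f l₀ x' i * pi' l₀ x') x i) +
        ∑ i, ∑ j, pdv (fun x' => pdv (fun x'' => Q l₀ x'' i j * pi' l₀ x'') x' j) x i)
      l₀ := by
  obtain ⟨hl0, hl1⟩ := hl₀
  have hl₀I : l₀ ∈ Set.Icc (0:ℝ) 1 := ⟨hl0.le, hl1.le⟩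
  have hZ0 : (0:ℝ) < Z l₀ := hZpos l₀ hl₀I
  -- continuity helpers
  have hlog_cont : Continuous fun a => Real.log (ℓ a) :=
    continuous_iff_continuousAt.2 fun a =>
      (Real.continuousAt_log (hℓ a).ne').comp hℓC2.continuous.continuousAt
  have hrpow_cont : ∀ l : ℝ, Continuous fun a => ℓ a ^ l := fun l =>
    hℓC2.continuous.rpow_const fun a => Or.inl (hℓ a).ne'
  have hε : (0:ℝ) < min l₀ (1 - l₀) := lt_min hl0 (by linarith)
  have hball : ∀ l ∈ Metric.ball l₀ (min l₀ (1 - l₀)), l ∈ Set.Icc (0:ℝ) 1 := by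
    intro l hl
    rw [Metric.mem_ball, Real.dist_eq, abs_lt] at hl
    have h1 : min l₀ (1-l₀) ≤ l₀ := min_le_left _ _
    have h2 : min l₀ (1-l₀) ≤ 1 - l₀ := min_le_right _ _
    exact ⟨by linarith [hl.1], by linarith [hl.2]⟩
  have hderiv_pt : ∀ (a : Fin d → ℝ) (l : ℝ),
      HasDerivAt (fun l' => p a * ℓ a ^ l') (p a * ℓ a ^ l * Real.log (ℓ a)) l := by
    intro a l
    have h := HasDerivAt.const_mul (p a)
      ((Real.hasStrictDerivAt_const_rpow (hℓ a) l).hasDerivAt)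
    rw [mul_assoc]; exact h
  have hdd := hasDerivAt_integral_of_dominated_loc_of_deriv_le
      (F := fun (l : ℝ) (a : Fin d → ℝ) => p a * ℓ a ^ l)
      (F' := fun (l : ℝ) (a : Fin d → ℝ) => p a * ℓ a ^ l * Real.log (ℓ a))
      (x₀ := l₀) (bound := g) (Metric.ball_mem_nhds l₀ hε)
      (Filter.Eventually.of_forall fun l =>
        (hpC2.continuous.mul (hrpow_cont l)).aestronglyMeasurable)
      (hint l₀ hl₀I)
      ((hpC2.continuous.mul (hrpow_cont l₀)).mul hlog_cont).aestronglyMeasurable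
      (Filter.Eventually.of_forall fun a l hl => by
        have hpos : 0 < p a * ℓ a ^ l := mul_pos (hp a) (Real.rpow_pos_of_pos (hℓ a) l)
        rw [Real.norm_eq_abs, abs_mul, abs_of_nonneg hpos.le]
        exact hdom l (hball l hl) a)
      hgint
      (Filter.Eventually.of_forall fun a l _ => hderiv_pt a l)
  obtain ⟨hF'int, hZderiv⟩ := hdd
  have hZD : HasDerivAt Z (∫ a, p a * ℓ a ^ l₀ * Real.log (ℓ a)) l₀ := by
    have hZe : Z = fun l => ∫ a, p a * ℓ a ^ l := funext hZdef
    rw [hZe]; exact hZderiv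
  have hc : (∫ x', pi' l₀ x' * Real.log (ℓ x'))
      = (∫ a, p a * ℓ a ^ l₀ * Real.log (ℓ a)) / Z l₀ := by
    rw [← integral_div]
    congr 1
    funext y
    rw [hpi]
    ring
  have hA : HasDerivAt (fun l => pi' l x)
      (pi' l₀ x * (Real.log (ℓ x) - ∫ x', pi' l₀ x' * Real.log (ℓ x'))) l₀ := by
    have h1 := (hderiv_pt x l₀).div hZD hZ0.ne'
    have heq : ((fun l' : ℝ => p x * ℓ x ^ l') / Z) = fun l => pi' l x := by
      funext l; rw [hpi]; rfl
    rw [heq] at h1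
    refine h1.congr_deriv ?_
    rw [hpi, hc]
    field_simp
  -- Step B: identify the Fokker-Planck RHS with the derivative
  have hπpos : ∀ y, 0 < pi' l₀ y := fun y => by
    rw [hpi]
    exact div_pos (mul_pos (hp y) (Real.rpow_pos_of_pos (hℓ y) l₀)) hZ0
  have hrpowC2 : ContDiff ℝ 2 fun y => ℓ y ^ l₀ :=
    contDiff_iff_contDiffAt.2 fun y =>
      (Real.contDiffAt_rpow_const_of_ne (hℓ y).ne').comp y hℓC2.contDiffAt
  have hπC2 : ContDiff ℝ 2 (pi' l₀) := by
    have he : pi' l₀ = fun y => p y * ℓ y ^ l₀ / Z l₀ := funext (hpi l₀)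
    rw [he]
    exact (hpC2.mul hrpowC2).div_const _
  have hπdiff : Differentiable ℝ (pi' l₀) := hπC2.differentiable (by norm_num)
  set G : Fin d → (Fin d → ℝ) → ℝ := fun j y => pdv (pi' l₀) y j / pi' l₀ y with hGdef
  have hGdiff : ∀ j, Differentiable ℝ (G j) := by
    intro j
    simp only [hGdef, div_eq_mul_inv]
    exact ((pdvC1 hπC2 j).differentiable one_ne_zero).mul
      (hπdiff.inv fun y => (hπpos y).ne')
  have hlogpdv : ∀ (y : Fin d → ℝ) (i : Fin d),
      pdv (fun x' => Real.log (pi' l₀ x')) y i = G i y := fun y i =>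
    pdv_log (hπdiff y) (hπpos y).ne' i
  have hpdvπ : ∀ (y : Fin d → ℝ) (i : Fin d),
      pdv (pi' l₀) y i = pi' l₀ y * G i y := by
    intro y i
    simp only [hGdef]
    rw [mul_comm, div_mul_cancel₀ _ (hπpos y).ne']
  have hfdiff : ∀ i, Differentiable ℝ fun y => f l₀ y i :=
    differentiable_pi.1 ((hf l₀ hl₀I).differentiable one_ne_zero)
  have hQC2 : ∀ i j, ContDiff ℝ 2 fun y => Q l₀ y i j := hQ l₀ hl₀I
  have hQdiff : ∀ i j, Differentiable ℝ fun y => Q l₀ y i j := fun i j =>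
    (hQC2 i j).differentiable (by norm_num)
  have hQpdvdiff : ∀ i j k, Differentiable ℝ fun y => pdv (fun y' => Q l₀ y' i j) y k :=
    fun i j k => (pdvC1 (hQC2 i j) k).differentiable one_ne_zero
  have hT1 : ∀ i, pdv (fun x' => f l₀ x' i * pi' l₀ x') x i
      = pi' l₀ x * (pdv (fun x' => f l₀ x' i) x i + G i x * f l₀ x i) := by
    intro i
    rw [pdv_mul (hfdiff i x) (hπdiff x), hpdvπ x i]
    ring
  have hT2 : ∀ i j, pdv (fun x' => pdv (fun x'' => Q l₀ x'' i j * pi' l₀ x'') x' j) x i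
      = pi' l₀ x * (pdv (fun x' => pdv (fun x'' => Q l₀ x'' i j) x' j) x i
        + pdv (fun x' => Q l₀ x' i j) x j * G i x
        + pdv (fun x' => Q l₀ x' i j) x i * G j x
        + Q l₀ x i j * (G i x * G j x)
        + Q l₀ x i j * pdv (G j) x i) := by
    intro i j
    have hstep : (fun x' => pdv (fun x'' => Q l₀ x'' i j * pi' l₀ x'') x' j)
        = fun x' => pdv (fun x'' => Q l₀ x'' i j) x' j * pi' l₀ x'
            + Q l₀ x' i j * (pi' l₀ x' * G j x') := by
      funext y
      rw [pdv_mul (hQdiff i j y) (hπdiff y), hpdvπ y j]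
    rw [hstep, pdv_add ((hQpdvdiff i j j x).fun_mul (hπdiff x))
        ((hQdiff i j x).fun_mul ((hπdiff x).fun_mul (hGdiff j x))) i,
      pdv_mul (hQpdvdiff i j j x) (hπdiff x) i,
      pdv_mul (hQdiff i j x) ((hπdiff x).fun_mul (hGdiff j x)) i,
      pdv_mul (hπdiff x) (hGdiff j x) i, hpdvπ x i]
    ring
  -- sums
  have e1 : ∑ i, pdv (fun x' => f l₀ x' i * pi' l₀ x') x i
      = pi' l₀ x * ((∑ i, pdv (fun x' => f l₀ x' i) x i) + ∑ i, G i x * f l₀ x i) := by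
    rw [← Finset.sum_add_distrib, Finset.mul_sum]
    exact Finset.sum_congr rfl fun i _ => hT1 i
  have hsymfun : ∀ i j, (fun x' => Q l₀ x' i j) = fun x' => Q l₀ x' j i :=
    fun i j => funext fun y => ((hQsymm l₀ y).apply i j).symm
  have hb : (∑ i, ∑ j, pdv (fun x' => Q l₀ x' i j) x j * G i x)
      = ∑ i, ∑ j, pdv (fun x' => Q l₀ x' i j) x i * G j x := by
    rw [Finset.sum_comm]
    refine Finset.sum_congr rfl fun j _ => Finset.sum_congr rfl fun i _ => ?_
    rw [hsymfun i j]
  have hc3 : (∑ i, ∑ j, Q l₀ x i j * pdv (G j) x i)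
      = ∑ i, ∑ j, Q l₀ x i j * pdv (G i) x j := by
    rw [Finset.sum_comm]
    refine Finset.sum_congr rfl fun j _ => Finset.sum_congr rfl fun i _ => ?_
    rw [← (hQsymm l₀ x).apply i j]
  have hc4 : (∑ i, ∑ j, Q l₀ x i j * (G i x * G j x))
      = ∑ i, ∑ j, G i x * Q l₀ x i j * G j x :=
    Finset.sum_congr rfl fun i _ => Finset.sum_congr rfl fun j _ => by ring
  have e2 : (∑ i, ∑ j, pdv (fun x' => pdv (fun x'' => Q l₀ x'' i j * pi' l₀ x'') x' j) x i)
      = pi' l₀ x * ((∑ i, ∑ j, pdv (fun x' => pdv (fun x'' => Q l₀ x'' i j) x' j) x i)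
        + (∑ i, ∑ j, pdv (fun x' => Q l₀ x' i j) x i * G j x)
        + (∑ i, ∑ j, pdv (fun x' => Q l₀ x' i j) x i * G j x)
        + (∑ i, ∑ j, G i x * Q l₀ x i j * G j x)
        + (∑ i, ∑ j, Q l₀ x i j * pdv (G i) x j)) := by
    calc (∑ i, ∑ j, pdv (fun x' => pdv (fun x'' => Q l₀ x'' i j * pi' l₀ x'') x' j) x i)
        = ∑ i, ∑ j, pi' l₀ x * (pdv (fun x' => pdv (fun x'' => Q l₀ x'' i j) x' j) x i
            + pdv (fun x' => Q l₀ x' i j) x j * G i x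
            + pdv (fun x' => Q l₀ x' i j) x i * G j x
            + Q l₀ x i j * (G i x * G j x)
            + Q l₀ x i j * pdv (G j) x i) :=
          Finset.sum_congr rfl fun i _ => Finset.sum_congr rfl fun j _ => hT2 i j
      _ = pi' l₀ x * ((∑ i, ∑ j, pdv (fun x' => pdv (fun x'' => Q l₀ x'' i j) x' j) x i)
            + (∑ i, ∑ j, pdv (fun x' => Q l₀ x' i j) x j * G i x)
            + (∑ i, ∑ j, pdv (fun x' => Q l₀ x' i j) x i * G j x)
            + (∑ i, ∑ j, Q l₀ x i j * (G i x * G j x))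
            + (∑ i, ∑ j, Q l₀ x i j * pdv (G j) x i)) := by
          simp only [← Finset.mul_sum, Finset.sum_add_distrib]
      _ = _ := by rw [hb, hc4, hc3]
  have hgov' := hgov l₀ ⟨hl0, hl1⟩ x
  simp only [hlogpdv] at hgov'
  have hk : Real.log (ℓ x) - (∫ x', pi' l₀ x' * Real.log (ℓ x'))
      = -(∑ i, pdv (fun x' => f l₀ x' i) x i) - (∑ i, G i x * f l₀ x i)
        + (∑ i, ∑ j, Q l₀ x i j * pdv (G i) x j)
        + (∑ i, ∑ j, G i x * Q l₀ x i j * G j x)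
        + 2 * (∑ i, ∑ j, pdv (fun x' => Q l₀ x' i j) x i * G j x)
        + (∑ i, ∑ j, pdv (fun x' => pdv (fun x'' => Q l₀ x'' i j) x' j) x i) := by
    linarith [hgov']
  have hfinal : (-(∑ i, pdv (fun x' => f l₀ x' i * pi' l₀ x') x i) +
        ∑ i, ∑ j, pdv (fun x' => pdv (fun x'' => Q l₀ x'' i j * pi' l₀ x'') x' j) x i)
      = pi' l₀ x * (Real.log (ℓ x) - ∫ x', pi' l₀ x' * Real.log (ℓ x')) := by
    rw [e1, e2, hk]
    ring
  rw [hfinal]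
  exact hA
end

section
/- (Theorem 2, deterministic case.) Let x : (0,1) → ℝ^d be differentiable with x'(λ) = f(λ, x(λ)) for all λ. Then for every λ₀ ∈ (0,1) the function λ ↦ log π_λ(x(λ)) − log q(λ, x(λ)) (the ideal log importance weight) is differentiable at λ₀ with derivative equal to log ℓ(x(λ₀)) − ∫ π_{λ₀}(x') log ℓ(x') dx' + tr(∂f/∂x (λ₀, x(λ₀))) + ⟨∇_x log π_{λ₀}(x(λ₀)), f(λ₀, x(λ₀))⟩. -/
open MeasureTheory

/-- A continuous linear functional on `ℝ^d` is the sum of its values on basis vectors. -/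
lemma clm_apply_eq_sum {d : ℕ} (L : (Fin d → ℝ) →L[ℝ] ℝ) (v : Fin d → ℝ) :
    L v = ∑ i, L (Pi.single i 1) * v i := by
  have hv : v = ∑ i, v i • (Pi.single i 1 : Fin d → ℝ) := by
    ext j
    simp [Pi.single_apply]
  conv_lhs => rw [hv]
  rw [map_sum]
  refine Finset.sum_congr rfl fun i _ => ?_
  rw [_root_.map_smul]
  simp [mul_comm]

/-- Theorem 2 (deterministic case): along a trajectory `x'(λ) = f(λ, x(λ))` of the
deterministic flow, whose density `q` satisfies the Liouville equation, the ideal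
log importance weight `log π_λ(x(λ)) - log q(λ, x(λ))` is differentiable with derivative
`log ℓ(x(λ₀)) - E_{π_{λ₀}}[log ℓ] + tr(∂f/∂x) + ⟨∇ log π_{λ₀}, f⟩`. -/
theorem stmt4 {d : ℕ} (hd : 1 ≤ d)
    (p ℓ : (Fin d → ℝ) → ℝ)
    (hp : ∀ x, 0 < p x) (hℓ : ∀ x, 0 < ℓ x)
    (hpC1 : ContDiff ℝ 1 p) (hℓC1 : ContDiff ℝ 1 ℓ)
    (hpdf : ∫ x, p x = 1)
    (Z : ℝ → ℝ) (hZdef : ∀ l : ℝ, Z l = ∫ x, p x * ℓ x ^ l)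
    (hint : ∀ l ∈ Set.Icc (0 : ℝ) 1, Integrable fun x => p x * ℓ x ^ l)
    (hZpos : ∀ l ∈ Set.Icc (0 : ℝ) 1, 0 < Z l)
    (g : (Fin d → ℝ) → ℝ) (hg : ∀ x, 0 ≤ g x) (hgint : Integrable g)
    (hdom : ∀ l ∈ Set.Icc (0 : ℝ) 1, ∀ x, p x * ℓ x ^ l * |Real.log (ℓ x)| ≤ g x)
    (pi' : ℝ → (Fin d → ℝ) → ℝ)
    (hpi : ∀ l x, pi' l x = p x * ℓ x ^ l / Z l)
    (f : ℝ → (Fin d → ℝ) → (Fin d → ℝ))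
    (hf : ContDiff ℝ 1 fun pr : ℝ × (Fin d → ℝ) => f pr.1 pr.2)
    (q : ℝ → (Fin d → ℝ) → ℝ)
    (hq : ∀ l x, 0 < q l x)
    (hqC1 : ContDiff ℝ 1 fun pr : ℝ × (Fin d → ℝ) => q pr.1 pr.2)
    -- Liouville (continuity) equation for q
    (hLiou : ∀ (l : ℝ) (x : Fin d → ℝ),
      deriv (fun l' => q l' x) l + ∑ i, pdv (fun x' => q l x' * f l x' i) x i = 0)
    (γ : ℝ → (Fin d → ℝ))
    (hγ : ∀ l ∈ Set.Ioo (0 : ℝ) 1, HasDerivAt γ (f l (γ l)) l)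
    (l₀ : ℝ) (hl₀ : l₀ ∈ Set.Ioo (0 : ℝ) 1) :
    HasDerivAt (fun l => Real.log (pi' l (γ l)) - Real.log (q l (γ l)))
      (Real.log (ℓ (γ l₀)) - (∫ x', pi' l₀ x' * Real.log (ℓ x')) +
        (∑ i, pdv (fun x' => f l₀ x' i) (γ l₀) i) +
        (∑ i, pdv (fun x' => Real.log (pi' l₀ x')) (γ l₀) i * f l₀ (γ l₀) i)) l₀ := by
  obtain ⟨hl₀0, hl₀1⟩ := hl₀
  have hl₀Icc : l₀ ∈ Set.Icc (0:ℝ) 1 := ⟨hl₀0.le, hl₀1.le⟩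
  set x₀ := γ l₀ with hx₀
  have hγ₀ : HasDerivAt γ (f l₀ x₀) l₀ := hγ l₀ ⟨hl₀0, hl₀1⟩
  set fv := f l₀ x₀ with hfv
  have hpc : Continuous p := hpC1.continuous
  have hℓc : Continuous ℓ := hℓC1.continuous
  have hpF : HasFDerivAt p (fderiv ℝ p x₀) x₀ :=
    (hpC1.differentiable one_ne_zero x₀).hasFDerivAt
  have hℓF : HasFDerivAt ℓ (fderiv ℝ ℓ x₀) x₀ :=
    (hℓC1.differentiable one_ne_zero x₀).hasFDerivAt
  set Lp := fderiv ℝ p x₀ with hLp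
  set Lℓ := fderiv ℝ ℓ x₀ with hLℓ
  have hZpos₀ : 0 < Z l₀ := hZpos l₀ hl₀Icc
  -- derivative of Z via dominated differentiation under the integral
  set ε := min l₀ (1 - l₀) with hε
  have hεpos : 0 < ε := lt_min hl₀0 (by linarith)
  have hball : Metric.ball l₀ ε ⊆ Set.Icc (0:ℝ) 1 := by
    intro l hl
    rw [Metric.mem_ball, Real.dist_eq, abs_lt] at hl
    have h1 := min_le_left l₀ (1 - l₀)
    have h2 := min_le_right l₀ (1 - l₀)
    constructor
    · linarith [hl.1]
    · linarith [hl.2]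
  have hFmeas : ∀ l : ℝ, AEStronglyMeasurable (fun x => p x * ℓ x ^ l)
      (volume : Measure (Fin d → ℝ)) := fun l =>
    (hpc.mul (hℓc.rpow_const fun x => Or.inl (hℓ x).ne')).aestronglyMeasurable
  have hF'cont : Continuous (fun x => p x * ℓ x ^ l₀ * Real.log (ℓ x)) :=
    (hpc.mul (hℓc.rpow_const fun x => Or.inl (hℓ x).ne')).mul
      (hℓc.log fun x => (hℓ x).ne')
  have hZd : HasDerivAt (fun l => ∫ x, p x * ℓ x ^ l)
      (∫ x, p x * ℓ x ^ l₀ * Real.log (ℓ x)) l₀ := by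
    have H := hasDerivAt_integral_of_dominated_loc_of_deriv_le
      (F := fun l (x : Fin d → ℝ) => p x * ℓ x ^ l)
      (F' := fun l (x : Fin d → ℝ) => p x * ℓ x ^ l * Real.log (ℓ x))
      (bound := g) (Metric.ball_mem_nhds l₀ hεpos)
      (Filter.Eventually.of_forall fun l => hFmeas l)
      (hint l₀ hl₀Icc) hF'cont.aestronglyMeasurable
      (Filter.Eventually.of_forall fun x l hl => by
        have hIcc := hball hl
        have h1 : ‖p x * ℓ x ^ l * Real.log (ℓ x)‖
            = p x * ℓ x ^ l * |Real.log (ℓ x)| := by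
          rw [Real.norm_eq_abs, abs_mul, abs_mul, abs_of_pos (hp x),
            abs_of_pos (Real.rpow_pos_of_pos (hℓ x) l)]
        rw [h1]
        exact hdom l hIcc x)
      hgint
      (Filter.Eventually.of_forall fun x l hl => by
        have := ((Real.hasStrictDerivAt_const_rpow (hℓ x) l).hasDerivAt).const_mul (p x)
        simpa [mul_assoc] using this)
    exact H.2
  have hZd' : HasDerivAt Z (∫ x, p x * ℓ x ^ l₀ * Real.log (ℓ x)) l₀ := by
    have hZf : Z = fun l => ∫ x, p x * ℓ x ^ l := funext hZdef
    rw [hZf]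
    exact hZd
  set Z' := ∫ x, p x * ℓ x ^ l₀ * Real.log (ℓ x) with hZ'
  -- The expectation identity
  have hI : (∫ x', pi' l₀ x' * Real.log (ℓ x')) = Z' / Z l₀ := by
    have hfun : (fun x' => pi' l₀ x' * Real.log (ℓ x')) =
        fun x' => (p x' * ℓ x' ^ l₀ * Real.log (ℓ x')) / Z l₀ := by
      funext x'
      rw [hpi]
      ring
    rw [hfun, integral_div]
  -- derivative of the π-part along the trajectory
  have hA : HasDerivAt (fun l => Real.log (p (γ l))) (Lp fv / p x₀) l₀ :=
    (hpF.comp_hasDerivAt l₀ hγ₀).log (hp x₀).ne'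
  have hBlog : HasDerivAt (fun l => Real.log (ℓ (γ l))) (Lℓ fv / ℓ x₀) l₀ :=
    (hℓF.comp_hasDerivAt l₀ hγ₀).log (hℓ x₀).ne'
  have hB : HasDerivAt (fun l => l * Real.log (ℓ (γ l)))
      (1 * Real.log (ℓ x₀) + l₀ * (Lℓ fv / ℓ x₀)) l₀ :=
    (hasDerivAt_id l₀).mul hBlog
  have hC : HasDerivAt (fun l => Real.log (Z l)) (Z' / Z l₀) l₀ :=
    hZd'.log hZpos₀.ne'
  have hπd : HasDerivAt
      (fun l => Real.log (p (γ l)) + l * Real.log (ℓ (γ l)) - Real.log (Z l))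
      (Lp fv / p x₀ + (1 * Real.log (ℓ x₀) + l₀ * (Lℓ fv / ℓ x₀)) - Z' / Z l₀) l₀ :=
    (hA.add hB).sub hC
  -- the q-part
  have hqj : HasFDerivAt (fun pr : ℝ × (Fin d → ℝ) => q pr.1 pr.2)
      (fderiv ℝ (fun pr : ℝ × (Fin d → ℝ) => q pr.1 pr.2) (l₀, x₀)) (l₀, x₀) :=
    (hqC1.differentiable one_ne_zero _).hasFDerivAt
  set Dq := fderiv ℝ (fun pr : ℝ × (Fin d → ℝ) => q pr.1 pr.2) (l₀, x₀) with hDq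
  have hcurve : HasDerivAt (fun l => (l, γ l)) (((1:ℝ), fv) : ℝ × (Fin d → ℝ)) l₀ :=
    (hasDerivAt_id l₀).prodMk hγ₀
  have hQ : HasDerivAt (fun l => q l (γ l)) (Dq (1, fv)) l₀ := by
    exact hqj.comp_hasDerivAt l₀ hcurve
  have hql : HasDerivAt (fun l' => q l' x₀) (Dq (1, 0)) l₀ := by
    have hc : HasDerivAt (fun l' => ((l', x₀) : ℝ × (Fin d → ℝ)))
        (((1:ℝ), (0 : Fin d → ℝ)) : ℝ × (Fin d → ℝ)) l₀ :=
      (hasDerivAt_id l₀).prodMk (hasDerivAt_const l₀ x₀)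
    exact hqj.comp_hasDerivAt l₀ hc
  set inrd := ContinuousLinearMap.inr ℝ ℝ (Fin d → ℝ) with hinrd
  have hqx : HasFDerivAt (fun y => q l₀ y) (Dq.comp inrd) x₀ := by
    have hc : HasFDerivAt (fun y : Fin d → ℝ => ((l₀, y) : ℝ × (Fin d → ℝ))) inrd x₀ :=
      hasFDerivAt_prodMk_right l₀ x₀
    exact hqj.comp x₀ hc
  -- f coordinates
  have hfj : HasFDerivAt (fun pr : ℝ × (Fin d → ℝ) => f pr.1 pr.2)
      (fderiv ℝ (fun pr : ℝ × (Fin d → ℝ) => f pr.1 pr.2) (l₀, x₀)) (l₀, x₀) :=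
    (hf.differentiable one_ne_zero _).hasFDerivAt
  set Df := fderiv ℝ (fun pr : ℝ × (Fin d → ℝ) => f pr.1 pr.2) (l₀, x₀) with hDf
  have hfx : HasFDerivAt (fun y => f l₀ y) (Df.comp inrd) x₀ := by
    have hc : HasFDerivAt (fun y : Fin d → ℝ => ((l₀, y) : ℝ × (Fin d → ℝ))) inrd x₀ :=
      hasFDerivAt_prodMk_right l₀ x₀
    exact hfj.comp x₀ hc
  have hfi : ∀ i : Fin d, HasFDerivAt (fun y => f l₀ y i)
      ((ContinuousLinearMap.proj i).comp (Df.comp inrd)) x₀ := fun i => by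
    have h := ((ContinuousLinearMap.proj i : (Fin d → ℝ) →L[ℝ] ℝ).hasFDerivAt
      (x := f l₀ x₀)).comp x₀ hfx
    exact h
  set T := ∑ i, pdv (fun x' => f l₀ x' i) x₀ i with hT
  have hTi : ∀ i : Fin d, pdv (fun x' => f l₀ x' i) x₀ i =
      ((ContinuousLinearMap.proj i).comp (Df.comp inrd)) (Pi.single i 1) := fun i => by
    unfold pdv
    rw [(hfi i).fderiv]
  -- Liouville identity at (l₀, x₀)
  have hLsum : ∑ i, pdv (fun x' => q l₀ x' * f l₀ x' i) x₀ i
      = q l₀ x₀ * T + Dq (0, fv) := by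
    have hterm : ∀ i : Fin d, pdv (fun x' => q l₀ x' * f l₀ x' i) x₀ i
        = q l₀ x₀ * ((ContinuousLinearMap.proj i).comp (Df.comp inrd)) (Pi.single i 1)
          + f l₀ x₀ i * (Dq.comp inrd) (Pi.single i 1) := fun i => by
      unfold pdv
      rw [(hqx.fun_mul (hfi i)).fderiv]
      simp
    rw [Finset.sum_congr rfl fun i _ => hterm i, Finset.sum_add_distrib,
      ← Finset.mul_sum]
    congr 1
    · rw [hT]
      congr 1
      exact Finset.sum_congr rfl fun i _ => (hTi i).symm
    · have : Dq (0, fv) = (Dq.comp inrd) fv := by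
        simp [hinrd]
      rw [this, clm_apply_eq_sum (Dq.comp inrd) fv]
      exact Finset.sum_congr rfl fun i _ => by ring
  have hLiou₀ : Dq (1, 0) + (q l₀ x₀ * T + Dq (0, fv)) = 0 := by
    have h := hLiou l₀ x₀
    rw [hql.deriv] at h
    rw [← hLsum]
    exact h
  have hDqsplit : Dq ((1 : ℝ), fv) = Dq (1, 0) + Dq (0, fv) := by
    rw [← map_add]
    congr 1
    simp
  have hDqval : Dq ((1 : ℝ), fv) = -(q l₀ x₀ * T) := by
    rw [hDqsplit]
    linarith [hLiou₀]
  have hqlog : HasDerivAt (fun l => Real.log (q l (γ l))) (-T) l₀ := by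
    have h := hQ.log (hq l₀ x₀).ne'
    have : Dq (1, fv) / q l₀ x₀ = -T := by
      rw [hDqval, neg_div, mul_comm, mul_div_assoc, div_self (hq l₀ x₀).ne', mul_one]
    rwa [this] at h
  -- gradient of log π_{l₀}
  have hπeq : (fun x' => Real.log (pi' l₀ x')) =
      fun x' => Real.log (p x') + l₀ * Real.log (ℓ x') - Real.log (Z l₀) := by
    funext x'
    rw [hpi, Real.log_div (mul_pos (hp x') (Real.rpow_pos_of_pos (hℓ x') l₀)).ne'
      hZpos₀.ne', Real.log_mul (hp x').ne'
      (Real.rpow_pos_of_pos (hℓ x') l₀).ne', Real.log_rpow (hℓ x')]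
  set M := (p x₀)⁻¹ • Lp + l₀ • ((ℓ x₀)⁻¹ • Lℓ) with hM
  have hMf : HasFDerivAt (fun x' => Real.log (pi' l₀ x')) M x₀ := by
    rw [hπeq]
    have h1 : HasFDerivAt (fun x' => Real.log (p x')) ((p x₀)⁻¹ • Lp) x₀ :=
      hpF.log (hp x₀).ne'
    have h2 : HasFDerivAt (fun x' => l₀ * Real.log (ℓ x'))
        (l₀ • ((ℓ x₀)⁻¹ • Lℓ)) x₀ := (hℓF.log (hℓ x₀).ne').const_mul l₀
    exact (h1.add h2).sub_const _
  have hG : ∑ i, pdv (fun x' => Real.log (pi' l₀ x')) x₀ i * fv i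
      = Lp fv / p x₀ + l₀ * (Lℓ fv / ℓ x₀) := by
    have hpd : ∀ i : Fin d, pdv (fun x' => Real.log (pi' l₀ x')) x₀ i
        = M (Pi.single i 1) := fun i => by
      unfold pdv
      rw [hMf.fderiv]
    rw [Finset.sum_congr rfl fun i _ => by rw [hpd i]]
    rw [← clm_apply_eq_sum M fv, hM]
    simp [div_eq_inv_mul]
  -- assemble
  have key : HasDerivAt (fun l => Real.log (pi' l (γ l)) - Real.log (q l (γ l)))
      ((Lp fv / p x₀ + (1 * Real.log (ℓ x₀) + l₀ * (Lℓ fv / ℓ x₀)) - Z' / Z l₀)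
        - (-T)) l₀ := by
    refine HasDerivAt.congr_of_eventuallyEq (hπd.fun_sub hqlog) ?_
    filter_upwards [Ioo_mem_nhds hl₀0 hl₀1] with l hl
    have hZl : 0 < Z l := hZpos l ⟨hl.1.le, hl.2.le⟩
    rw [hpi, Real.log_div (mul_pos (hp _) (Real.rpow_pos_of_pos (hℓ _) l)).ne'
      hZl.ne', Real.log_mul (hp _).ne'
      (Real.rpow_pos_of_pos (hℓ _) l).ne', Real.log_rpow (hℓ _)]
  have hfinal : Real.log (ℓ x₀) - (∫ x', pi' l₀ x' * Real.log (ℓ x')) + T +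
      (∑ i, pdv (fun x' => Real.log (pi' l₀ x')) x₀ i * fv i)
      = (Lp fv / p x₀ + (1 * Real.log (ℓ x₀) + l₀ * (Lℓ fv / ℓ x₀)) - Z' / Z l₀)
        - (-T) := by
    rw [hI, hG]
    ring
  rw [hfinal]
  exact key
end

section
/- (Theorem 4, deterministic case κ = 0.) Fix λ₀ ∈ [0,1] and x₀ ∈ ℝ^d. For λ ∈ [0,1], define S(λ) = Σ_λ^{1/2} (Σ_λ^{1/2} Σ_{λ₀}⁻¹ Σ_λ^{1/2})^{1/2} Σ_λ^{−1/2} (the principal square root of Σ_λ Σ_{λ₀}⁻¹) and φ(λ) = μ_λ + S(λ)(x₀ − μ_{λ₀}). Then φ(λ₀) = x₀ and, for every λ ∈ (0,1), φ is differentiable at λ with derivative φ'(λ) = Σ_λ Hᵀ R⁻¹ ( (y − H μ_λ) − ½ H (φ(λ) − μ_λ) ); i.e. φ is the exact solution of the deterministic optimal Gaussian flow ODE started at x₀ at pseudo-time λ₀. -/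
open Matrix
open scoped Classical

/-- The symmetric positive semidefinite square root of a positive semidefinite matrix
(junk value `0` otherwise). For a symmetric positive definite matrix this is its unique
symmetric positive definite square root. -/
noncomputable def spdSqrt {d : ℕ} (A : Matrix (Fin d) (Fin d) ℝ) :
    Matrix (Fin d) (Fin d) ℝ :=
  if h : A.PosSemidef then
    (h.1.eigenvectorUnitary : Matrix (Fin d) (Fin d) ℝ) *
      diagonal (fun i => Real.sqrt (h.1.eigenvalues i)) *
      (star h.1.eigenvectorUnitary : Matrix (Fin d) (Fin d) ℝ)
  else 0

section StmtAux

variable {d : ℕ}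
open scoped MatrixOrder

private lemma aux_spdSqrt_eq_cfc {A : Matrix (Fin d) (Fin d) ℝ} (hA : A.PosSemidef) :
    spdSqrt A = CFC.sqrt A := by
  rw [CFC.sqrt_eq_cfc, cfc_nnreal_eq_real _ A hA.nonneg, hA.1.cfc_eq, IsHermitian.cfc,
    Unitary.conjStarAlgAut_apply, spdSqrt, dif_pos hA]
  congr 2
  refine congrArg diagonal (funext fun i => ?_)
  simp [hA.eigenvalues_nonneg i]

private lemma aux_spdSqrt_mul_self {A : Matrix (Fin d) (Fin d) ℝ} (hA : A.PosSemidef) :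
    spdSqrt A * spdSqrt A = A := by
  rw [aux_spdSqrt_eq_cfc hA]; exact CFC.sqrt_mul_sqrt_self A hA.nonneg

private lemma aux_spdSqrt_psd {A : Matrix (Fin d) (Fin d) ℝ} (hA : A.PosSemidef) :
    (spdSqrt A).PosSemidef := by
  rw [aux_spdSqrt_eq_cfc hA]; exact (CFC.sqrt_nonneg A).posSemidef

private lemma aux_spdSqrt_unique {A C : Matrix (Fin d) (Fin d) ℝ} (hA : A.PosSemidef)
    (hC : C.PosSemidef) (hCA : C ^ 2 = A) : spdSqrt A = C := by
  rw [aux_spdSqrt_eq_cfc hA]; exact CFC.sqrt_unique (by rw [← sq, hCA]) hC.nonneg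

private lemma aux_diag_mulVec (c w : Fin d → ℝ) :
    (diagonal c) *ᵥ w = fun i => c i * w i := by
  funext i; exact mulVec_diagonal c w i

private lemma aux_conj_mulVec (P Q : Matrix (Fin d) (Fin d) ℝ) (c : Fin d → ℝ) (v : Fin d → ℝ) :
    (P * diagonal c * Q) *ᵥ v = P *ᵥ (fun i => c i * (Q *ᵥ v) i) := by
  rw [← mulVec_mulVec, ← mulVec_mulVec, aux_diag_mulVec]

private lemma aux_mulVec_eq_sum (P : Matrix (Fin d) (Fin d) ℝ) (v : Fin d → ℝ) :
    P *ᵥ v = ∑ i, v i • (fun j => P j i) := by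
  ext j
  simp [Matrix.mulVec, dotProduct, Finset.sum_apply, mul_comm]

private lemma aux_deriv (δ A B Z s0 l : ℝ) (hδ : 0 ≤ δ) (hl : 0 ≤ l) :
    HasDerivAt (fun t : ℝ => (1 + t * δ)⁻¹ * (A + t * B) + s0 * (Real.sqrt (1 + t * δ))⁻¹ * Z)
      ((1 + l * δ)⁻¹ * B - (1 + l * δ)⁻¹ * δ * ((1 + l * δ)⁻¹ * (A + l * B))
        - (1 / 2) * ((1 + l * δ)⁻¹ * δ * (s0 * (Real.sqrt (1 + l * δ))⁻¹ * Z))) l := by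
  have hpos : (0:ℝ) < 1 + l * δ := add_pos_of_pos_of_nonneg one_pos (mul_nonneg hl hδ)
  have hs : 0 < Real.sqrt (1 + l * δ) := Real.sqrt_pos.mpr hpos
  have h1 : HasDerivAt (fun t : ℝ => 1 + t * δ) δ l := by
    simpa using ((hasDerivAt_id l).mul_const δ).const_add 1
  have h2 := h1.inv hpos.ne'
  have h3 : HasDerivAt (fun t : ℝ => A + t * B) B l := by
    simpa using ((hasDerivAt_id l).mul_const B).const_add A
  have h4 := h2.mul h3
  have h5 := (h1.sqrt hpos.ne').inv hs.ne'
  have h6 := (h5.const_mul s0).mul_const Z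
  have h7 := h4.add h6
  refine h7.congr_deriv ?_
  simp only [Pi.inv_apply]
  set s := Real.sqrt (1 + l * δ) with hsdef
  have hss : s * s = 1 + l * δ := Real.mul_self_sqrt hpos.le
  rw [← hss]
  field_simp
  ring

end StmtAux

set_option maxHeartbeats 2000000 in
/-- Theorem 4 (deterministic case κ = 0): with
`S(λ) = Σ_λ^{1/2} (Σ_λ^{1/2} Σ_{λ₀}⁻¹ Σ_λ^{1/2})^{1/2} Σ_λ^{-1/2}` (the principal square
root of `Σ_λ Σ_{λ₀}⁻¹`), the curve `φ(λ) = μ_λ + S(λ)(x₀ - μ_{λ₀})` satisfies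
`φ(λ₀) = x₀` and solves the deterministic optimal Gaussian flow ODE
`φ'(λ) = Σ_λ Hᵀ R⁻¹ ((y - H μ_λ) - ½ H (φ(λ) - μ_λ))`. -/
theorem stmt9 {d m : ℕ} (hd : 1 ≤ d) (hm : 1 ≤ m)
    (μ₀ : Fin d → ℝ) (Sig0 : Matrix (Fin d) (Fin d) ℝ) (hSig0 : Sig0.PosDef)
    (H : Matrix (Fin m) (Fin d) ℝ)
    (R : Matrix (Fin m) (Fin m) ℝ) (hR : R.PosDef)
    (y : Fin m → ℝ)
    (Sig : ℝ → Matrix (Fin d) (Fin d) ℝ)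
    (hSig : ∀ l : ℝ, Sig l = (Sig0⁻¹ + l • (Hᵀ * R⁻¹ * H))⁻¹)
    (μ : ℝ → (Fin d → ℝ))
    (hμ : ∀ l : ℝ, μ l = Sig l *ᵥ (Sig0⁻¹ *ᵥ μ₀ + l • ((Hᵀ * R⁻¹) *ᵥ y)))
    (l₀ : ℝ) (hl₀ : l₀ ∈ Set.Icc (0 : ℝ) 1) (x₀ : Fin d → ℝ)
    (S : ℝ → Matrix (Fin d) (Fin d) ℝ)
    (hS : ∀ l : ℝ, S l =
      spdSqrt (Sig l) * spdSqrt (spdSqrt (Sig l) * (Sig l₀)⁻¹ * spdSqrt (Sig l)) *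
        (spdSqrt (Sig l))⁻¹)
    (φ : ℝ → (Fin d → ℝ))
    (hφ : ∀ l : ℝ, φ l = μ l + S l *ᵥ (x₀ - μ l₀)) :
    φ l₀ = x₀ ∧
      ∀ l ∈ Set.Ioo (0 : ℝ) 1,
        HasDerivAt φ
          (Sig l *ᵥ ((Hᵀ * R⁻¹) *ᵥ ((y - H *ᵥ μ l) - (1 / 2 : ℝ) • (H *ᵥ (φ l - μ l)))))
          l := by
  obtain ⟨hl₀0, hl₀1⟩ := hl₀
  set M := Hᵀ * R⁻¹ * H with hMdef
  have hM : M.PosSemidef := by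
    have h1 := hR.inv.posSemidef.conjTranspose_mul_mul_same H
    rwa [conjTranspose_eq_transpose_of_trivial] at h1
  have hX : ∀ l : ℝ, 0 ≤ l → (Sig0⁻¹ + l • M).PosDef := fun l hl =>
    hSig0.inv.add_posSemidef (by
      refine ⟨?_, fun x => ?_⟩
      · unfold Matrix.IsHermitian
        rw [conjTranspose_smul, hM.1.eq]; simp
      · exact (hM.smul hl).2 x)
  have hXdet : ∀ l : ℝ, 0 ≤ l → IsUnit (Sig0⁻¹ + l • M).det := fun l hl =>
    (isUnit_iff_isUnit_det _).mp (hX l hl).isUnit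
  have hSigPD : ∀ l : ℝ, 0 ≤ l → (Sig l).PosDef := fun l hl => by
    rw [hSig]; exact (hX l hl).inv
  have hSiginv : ∀ l : ℝ, 0 ≤ l → (Sig l)⁻¹ = Sig0⁻¹ + l • M := fun l hl => by
    rw [hSig]; exact nonsing_inv_nonsing_inv _ (hXdet l hl)
  set s0 := spdSqrt Sig0 with hs0def
  have hs0sq : s0 * s0 = Sig0 := aux_spdSqrt_mul_self hSig0.posSemidef
  have hs0sym : s0ᵀ = s0 := by
    rw [← conjTranspose_eq_transpose_of_trivial]; exact (aux_spdSqrt_psd hSig0.posSemidef).1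
  have hs0det : IsUnit s0.det := by
    have h2 : s0.det * s0.det = Sig0.det := by rw [← det_mul, hs0sq]
    exact isUnit_iff_ne_zero.mpr fun h => hSig0.det_pos.ne' (by rw [← h2, h, zero_mul])
  have hs0i1 : s0 * s0⁻¹ = 1 := mul_nonsing_inv _ hs0det
  have hs0i2 : s0⁻¹ * s0 = 1 := nonsing_inv_mul _ hs0det
  have hs0isym : (s0⁻¹)ᵀ = s0⁻¹ := by rw [transpose_nonsing_inv, hs0sym]
  have hK : (s0 * M * s0).PosSemidef := by
    have h3 := hM.mul_mul_conjTranspose_same s0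
    rwa [conjTranspose_eq_transpose_of_trivial, hs0sym] at h3
  set U : Matrix (Fin d) (Fin d) ℝ := (hK.1.eigenvectorUnitary : Matrix (Fin d) (Fin d) ℝ)
    with hUdef
  set D : Fin d → ℝ := hK.1.eigenvalues with hDdef
  have hDnn : ∀ i, 0 ≤ D i := hK.eigenvalues_nonneg
  have hUstar : star U = Uᵀ := by
    rw [Matrix.star_eq_conjTranspose, conjTranspose_eq_transpose_of_trivial]
  have hU1 : U * Uᵀ = 1 := by
    rw [← hUstar]; exact mem_unitaryGroup_iff.mp hK.1.eigenvectorUnitary.2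
  have hU2 : Uᵀ * U = 1 := by
    rw [← hUstar]; exact mem_unitaryGroup_iff'.mp hK.1.eigenvectorUnitary.2
  have hspec : s0 * M * s0 = U * diagonal D * Uᵀ := by
    have h4 := hK.1.spectral_theorem
    rwa [Unitary.conjStarAlgAut_apply, hUstar, RCLike.ofReal_real_eq_id, Function.id_comp] at h4
  -- the transfer matrix P
  set P := s0 * U with hPdef
  set Pinv := Uᵀ * s0⁻¹ with hPinvdef
  have hPP : P * Pinv = 1 := by
    rw [hPdef, hPinvdef, mul_assoc, ← mul_assoc U, hU1, one_mul, hs0i1]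
  have hPP2 : Pinv * P = 1 := by
    rw [hPdef, hPinvdef, mul_assoc, ← mul_assoc (s0⁻¹), hs0i2, one_mul, hU2]
  have hPTT : Pᵀ * Pinvᵀ = 1 := by rw [← transpose_mul, hPP2, transpose_one]
  have hPTT2 : Pinvᵀ * Pᵀ = 1 := by rw [← transpose_mul, hPP, transpose_one]
  have hPinvT : Pinvᵀ = s0⁻¹ * U := by rw [hPinvdef, transpose_mul, hs0isym, transpose_transpose]
  have hMP : M = Pinvᵀ * diagonal D * Pinv := by
    have h5 : s0⁻¹ * (s0 * M * s0) * s0⁻¹ = M := by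
      rw [← mul_assoc, ← mul_assoc, hs0i2, one_mul, mul_assoc, hs0i1, mul_one]
    rw [hPinvT, hPinvdef]
    calc M = s0⁻¹ * (s0 * M * s0) * s0⁻¹ := h5.symm
    _ = s0⁻¹ * (U * diagonal D * Uᵀ) * s0⁻¹ := by rw [hspec]
    _ = s0⁻¹ * U * diagonal D * (Uᵀ * s0⁻¹) := by
        simp only [mul_assoc]
  have hS0P : Sig0⁻¹ = Pinvᵀ * Pinv := by
    rw [hPinvT, hPinvdef, ← hs0sq, Matrix.mul_inv_rev]
    rw [mul_assoc, ← mul_assoc U, hU1, one_mul]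
  have hXP : ∀ l : ℝ, Sig0⁻¹ + l • M = Pinvᵀ * diagonal (fun i => 1 + l * D i) * Pinv := by
    intro l
    have hdiag : (diagonal (fun i => 1 + l * D i) : Matrix (Fin d) (Fin d) ℝ)
        = 1 + l • diagonal D := by
      rw [← diagonal_one, ← diagonal_smul, ← diagonal_add]
      rfl
    rw [hdiag, mul_add, add_mul, mul_one, ← hS0P, Matrix.mul_smul, Matrix.smul_mul, ← hMP]
  have hposD : ∀ l : ℝ, 0 ≤ l → ∀ i, (0:ℝ) < 1 + l * D i := fun l hl i =>
    add_pos_of_pos_of_nonneg one_pos (mul_nonneg hl (hDnn i))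
  have hSigP : ∀ l : ℝ, 0 ≤ l →
      Sig l = P * diagonal (fun i => (1 + l * D i)⁻¹) * Pᵀ := by
    intro l hl
    rw [hSig, hXP]
    refine inv_eq_right_inv ?_
    calc Pinvᵀ * diagonal (fun i => 1 + l * D i) * Pinv *
          (P * diagonal (fun i => (1 + l * D i)⁻¹) * Pᵀ)
        = Pinvᵀ * diagonal (fun i => 1 + l * D i) * (Pinv * P) *
          diagonal (fun i => (1 + l * D i)⁻¹) * Pᵀ := by simp only [mul_assoc]
      _ = Pinvᵀ * (diagonal (fun i => 1 + l * D i) *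
          diagonal (fun i => (1 + l * D i)⁻¹)) * Pᵀ := by
          rw [hPP2, mul_one]; simp only [mul_assoc]
      _ = 1 := by
          rw [diagonal_mul_diagonal]
          have h6 : (fun i => (1 + l * D i) * (1 + l * D i)⁻¹) = fun _ => (1:ℝ) := by
            funext i; exact mul_inv_cancel₀ (hposD l hl i).ne'
          rw [h6, diagonal_one, mul_one, hPTT2]
  -- identification of S l
  have hNS : ∀ l : ℝ, 0 ≤ l → S l =
      P * diagonal (fun i => Real.sqrt (1 + l₀ * D i) * (Real.sqrt (1 + l * D i))⁻¹)
        * Pinv := by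
    intro l hl
    set g : Fin d → ℝ := fun i => Real.sqrt (1 + l₀ * D i) * (Real.sqrt (1 + l * D i))⁻¹
      with hgdef
    have hPDl := hSigPD l hl
    have hPDl0 := hSigPD l₀ hl₀0
    have hpsd := hPDl.posSemidef
    set sh := spdSqrt (Sig l) with hshdef
    have hshsq : sh * sh = Sig l := aux_spdSqrt_mul_self hpsd
    have hshsym : shᵀ = sh := by
      rw [← conjTranspose_eq_transpose_of_trivial]; exact (aux_spdSqrt_psd hpsd).1
    have hshdet : IsUnit sh.det := by
      have h2 : sh.det * sh.det = (Sig l).det := by rw [← det_mul, hshsq]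
      exact isUnit_iff_ne_zero.mpr fun h => hPDl.det_pos.ne' (by rw [← h2, h, zero_mul])
    have hshi1 : sh * sh⁻¹ = 1 := mul_nonsing_inv _ hshdet
    have hshi2 : sh⁻¹ * sh = 1 := nonsing_inv_mul _ hshdet
    have hshisym : (sh⁻¹)ᵀ = sh⁻¹ := by rw [transpose_nonsing_inv, hshsym]
    have hsqrtSig : spdSqrt (Sig l) = sh := rfl
    set B := sh * (Sig l₀)⁻¹ * sh with hBdef
    have hB : B.PosSemidef := by
      have h3 := hPDl0.inv.posSemidef.mul_mul_conjTranspose_same sh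
      rwa [conjTranspose_eq_transpose_of_trivial, hshsym] at h3
    set W := sh⁻¹ * P with hWdef
    have hWT : Wᵀ = Pᵀ * sh⁻¹ := by rw [hWdef, transpose_mul, hshisym]
    have hWW : Wᵀ * W = diagonal (fun i => 1 + l * D i) := by
      rw [hWT, hWdef]
      calc Pᵀ * sh⁻¹ * (sh⁻¹ * P) = Pᵀ * (sh⁻¹ * sh⁻¹) * P := by simp only [mul_assoc]
        _ = Pᵀ * (Sig l)⁻¹ * P := by rw [← Matrix.mul_inv_rev, hshsq]
        _ = Pᵀ * (Pinvᵀ * diagonal (fun i => 1 + l * D i) * Pinv) * P := by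
            rw [hSiginv l hl, hXP l]
        _ = (Pᵀ * Pinvᵀ) * diagonal (fun i => 1 + l * D i) * (Pinv * P) := by
            simp only [mul_assoc]
        _ = diagonal (fun i => 1 + l * D i) := by rw [hPTT, hPP2, one_mul, mul_one]
    set e : Fin d → ℝ := fun i => g i * (1 + l * D i)⁻¹ with hedef
    set C := W * diagonal e * Wᵀ with hCdef
    have hCpsd : C.PosSemidef := by
      have hent : ∀ i, 0 ≤ e i := fun i =>
        mul_nonneg (mul_nonneg (Real.sqrt_nonneg _) (inv_nonneg.mpr (Real.sqrt_nonneg _)))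
          (inv_nonneg.mpr (hposD l hl i).le)
      have h4 := (posSemidef_diagonal_iff.mpr hent).mul_mul_conjTranspose_same W
      rwa [conjTranspose_eq_transpose_of_trivial] at h4
    have hkey : P * diagonal (fun i => (1 + l * D i)⁻¹ * (1 + l₀ * D i) * (1 + l * D i)⁻¹) * Pᵀ
        = Sig l * (Sig l₀)⁻¹ * Sig l := by
      rw [hSigP l hl, hSiginv l₀ hl₀0, hXP l₀]
      symm
      calc P * diagonal (fun i => (1 + l * D i)⁻¹) * Pᵀ *
            (Pinvᵀ * diagonal (fun i => 1 + l₀ * D i) * Pinv) *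
            (P * diagonal (fun i => (1 + l * D i)⁻¹) * Pᵀ)
          = P * diagonal (fun i => (1 + l * D i)⁻¹) * (Pᵀ * Pinvᵀ) *
            diagonal (fun i => 1 + l₀ * D i) * (Pinv * P) *
            diagonal (fun i => (1 + l * D i)⁻¹) * Pᵀ := by simp only [mul_assoc]
        _ = P * (diagonal (fun i => (1 + l * D i)⁻¹) * diagonal (fun i => 1 + l₀ * D i) *
            diagonal (fun i => (1 + l * D i)⁻¹)) * Pᵀ := by
            rw [hPTT, hPP2, mul_one, mul_one]; simp only [mul_assoc]
        _ = _ := by rw [diagonal_mul_diagonal, diagonal_mul_diagonal]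
    have hCsq : C ^ 2 = B := by
      have hee : ∀ i : Fin d, e i * (1 + l * D i) * e i
          = (1 + l * D i)⁻¹ * (1 + l₀ * D i) * (1 + l * D i)⁻¹ := by
        intro i
        have hs : (0:ℝ) < Real.sqrt (1 + l * D i) := Real.sqrt_pos.mpr (hposD l hl i)
        have hs2 : Real.sqrt (1 + l * D i) * Real.sqrt (1 + l * D i) = 1 + l * D i :=
          Real.mul_self_sqrt (hposD l hl i).le
        have ht2 : Real.sqrt (1 + l₀ * D i) * Real.sqrt (1 + l₀ * D i) = 1 + l₀ * D i :=
          Real.mul_self_sqrt (hposD l₀ hl₀0 i).le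
        rw [hedef, hgdef]
        simp only
        have key : (Real.sqrt (1 + l * D i))⁻¹ * (Real.sqrt (1 + l * D i))⁻¹ = (1 + l * D i)⁻¹ := by
          rw [← mul_inv, hs2]
        have hXinv : (1 + l * D i)⁻¹ * (1 + l * D i) = 1 := inv_mul_cancel₀ (hposD l hl i).ne'
        linear_combination ((Real.sqrt (1 + l * D i))⁻¹ * (Real.sqrt (1 + l * D i))⁻¹ *
          (1 + l * D i)⁻¹ * (1 + l * D i)⁻¹ * (1 + l * D i)) * ht2 +
          ((1 + l₀ * D i) * (1 + l * D i)⁻¹ * (1 + l * D i)⁻¹ * (1 + l * D i)) * key +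
          ((1 + l₀ * D i) * (1 + l * D i)⁻¹ * (1 + l * D i)⁻¹) * hXinv
      have hCC : C * C = W * diagonal (fun i =>
          (1 + l * D i)⁻¹ * (1 + l₀ * D i) * (1 + l * D i)⁻¹) * Wᵀ := by
        calc C * C = W * diagonal e * (Wᵀ * W) * diagonal e * Wᵀ := by
              rw [hCdef]; simp only [mul_assoc]
          _ = W * (diagonal e * diagonal (fun i => 1 + l * D i) * diagonal e) * Wᵀ := by
              rw [hWW]; simp only [mul_assoc]
          _ = _ := by
              have hdd : (diagonal e * diagonal (fun i => 1 + l * D i) * diagonal e :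
                  Matrix (Fin d) (Fin d) ℝ)
                  = diagonal (fun i => (1 + l * D i)⁻¹ * (1 + l₀ * D i) * (1 + l * D i)⁻¹) := by
                rw [diagonal_mul_diagonal, diagonal_mul_diagonal]
                exact congrArg Matrix.diagonal (funext hee)
              rw [hdd]
      rw [sq, hCC]
      calc W * diagonal (fun i => (1 + l * D i)⁻¹ * (1 + l₀ * D i) * (1 + l * D i)⁻¹) * Wᵀ
          = sh⁻¹ * (P * diagonal (fun i => (1 + l * D i)⁻¹ * (1 + l₀ * D i) * (1 + l * D i)⁻¹)
              * Pᵀ) * sh⁻¹ := by rw [hWdef, hWT]; simp only [mul_assoc]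
        _ = sh⁻¹ * (Sig l * (Sig l₀)⁻¹ * Sig l) * sh⁻¹ := by rw [hkey]
        _ = sh⁻¹ * (sh * sh * (Sig l₀)⁻¹ * (sh * sh)) * sh⁻¹ := by rw [hshsq]
        _ = (sh⁻¹ * sh) * (sh * (Sig l₀)⁻¹ * sh) * (sh * sh⁻¹) := by simp only [mul_assoc]
        _ = B := by rw [hshi2, hshi1, one_mul, mul_one, hBdef]
    have hsqrtB : spdSqrt B = C := aux_spdSqrt_unique hB hCpsd hCsq
    rw [hS l, hsqrtSig, ← hBdef, hsqrtB]
    calc sh * C * sh⁻¹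
        = (sh * sh⁻¹) * P * diagonal e * Pᵀ * (sh⁻¹ * sh⁻¹) := by
          rw [hCdef, hWdef, hWT]; simp only [mul_assoc]
      _ = P * diagonal e * (Pᵀ * (Sig l)⁻¹) := by
          rw [hshi1, ← Matrix.mul_inv_rev, hshsq, one_mul]; simp only [mul_assoc]
      _ = P * diagonal e * (Pᵀ * Pinvᵀ * diagonal (fun i => 1 + l * D i) * Pinv) := by
          rw [hSiginv l hl, hXP l]; simp only [mul_assoc]
      _ = P * (diagonal e * diagonal (fun i => 1 + l * D i)) * Pinv := by
          rw [hPTT, one_mul]; simp only [mul_assoc]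
      _ = P * diagonal g * Pinv := by
          have hdd2 : (diagonal e * diagonal (fun i => 1 + l * D i) :
              Matrix (Fin d) (Fin d) ℝ) = diagonal g := by
            rw [diagonal_mul_diagonal]
            refine congrArg Matrix.diagonal (funext fun i => ?_)
            rw [hedef]
            simp only
            exact inv_mul_cancel_right₀ (hposD l hl i).ne' (g i)
          rw [hdd2]
  -- vector-level identities
  set g : ℝ → Fin d → ℝ :=
    fun l i => Real.sqrt (1 + l₀ * D i) * (Real.sqrt (1 + l * D i))⁻¹ with hgdef
  set a : Fin d → ℝ := Pᵀ *ᵥ (Sig0⁻¹ *ᵥ μ₀) with hadef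
  set β : Fin d → ℝ := Pᵀ *ᵥ ((Hᵀ * R⁻¹) *ᵥ y) with hβdef
  set z : Fin d → ℝ := Pinv *ᵥ (x₀ - μ l₀) with hzdef
  set w : ℝ → Fin d → ℝ := fun l i => (1 + l * D i)⁻¹ * (a i + l * β i) with hwdef
  have hμP : ∀ l : ℝ, 0 ≤ l → μ l = P *ᵥ (w l) := by
    intro l hl
    rw [hμ l, hSigP l hl, aux_conj_mulVec]
    congr 1
    funext i
    rw [hwdef]
    simp only [mulVec_add, mulVec_smul, Pi.add_apply, Pi.smul_apply, smul_eq_mul]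
    rfl
  have hφμ : ∀ l : ℝ, 0 ≤ l → φ l - μ l = P *ᵥ (fun i => g l i * z i) := by
    intro l hl
    rw [hφ l, add_sub_cancel_left, hNS l hl, aux_conj_mulVec]
  have hφP : ∀ l : ℝ, 0 ≤ l → φ l = P *ᵥ (fun i => w l i + g l i * z i) := by
    intro l hl
    have h1 : φ l = μ l + (φ l - μ l) := by abel
    rw [h1, hφμ l hl, hμP l hl, ← mulVec_add]
    refine congrArg (fun v => P *ᵥ v) ?_
    funext i
    simp only [Pi.add_apply]
  have hSM : ∀ l : ℝ, 0 ≤ l →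
      Sig l * M = P * diagonal (fun i => (1 + l * D i)⁻¹ * D i) * Pinv := by
    intro l hl
    rw [hSigP l hl, hMP]
    calc P * diagonal (fun i => (1 + l * D i)⁻¹) * Pᵀ * (Pinvᵀ * diagonal D * Pinv)
        = P * (diagonal (fun i => (1 + l * D i)⁻¹) * ((Pᵀ * Pinvᵀ) * diagonal D)) * Pinv := by
          simp only [mul_assoc]
      _ = _ := by rw [hPTT, one_mul, diagonal_mul_diagonal]
  have hRHS : ∀ l : ℝ, 0 ≤ l →
      Sig l *ᵥ ((Hᵀ * R⁻¹) *ᵥ ((y - H *ᵥ μ l) - (1 / 2 : ℝ) • (H *ᵥ (φ l - μ l))))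
        = P *ᵥ (fun i => (1 + l * D i)⁻¹ * β i
            - (1 + l * D i)⁻¹ * D i * w l i
            - (1 / 2 : ℝ) * ((1 + l * D i)⁻¹ * D i * (g l i * z i))) := by
    intro l hl
    have hinner : (Hᵀ * R⁻¹) *ᵥ ((y - H *ᵥ μ l) - (1 / 2 : ℝ) • (H *ᵥ (φ l - μ l)))
        = (Hᵀ * R⁻¹) *ᵥ y - M *ᵥ μ l - (1 / 2 : ℝ) • (M *ᵥ (φ l - μ l)) := by
      simp only [mulVec_sub, mulVec_smul, mulVec_mulVec, hMdef]
    rw [hinner, mulVec_sub, mulVec_smul, mulVec_sub]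
    have h1 : Sig l *ᵥ ((Hᵀ * R⁻¹) *ᵥ y) = P *ᵥ (fun i => (1 + l * D i)⁻¹ * β i) := by
      rw [hSigP l hl, aux_conj_mulVec]
    have h2 : Sig l *ᵥ (M *ᵥ μ l)
        = P *ᵥ (fun i => (1 + l * D i)⁻¹ * D i * w l i) := by
      rw [mulVec_mulVec, hSM l hl, hμP l hl, mulVec_mulVec]
      have h0 : P * diagonal (fun i => (1 + l * D i)⁻¹ * D i) * Pinv * P
          = P * diagonal (fun i => (1 + l * D i)⁻¹ * D i) := by
        rw [mul_assoc, hPP2, mul_one]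
      rw [h0, ← mulVec_mulVec, aux_diag_mulVec]
    have h3 : Sig l *ᵥ (M *ᵥ (φ l - μ l))
        = P *ᵥ (fun i => (1 + l * D i)⁻¹ * D i * (g l i * z i)) := by
      rw [mulVec_mulVec, hSM l hl, hφμ l hl, mulVec_mulVec]
      have h0 : P * diagonal (fun i => (1 + l * D i)⁻¹ * D i) * Pinv * P
          = P * diagonal (fun i => (1 + l * D i)⁻¹ * D i) := by
        rw [mul_assoc, hPP2, mul_one]
      rw [h0, ← mulVec_mulVec, aux_diag_mulVec]
    rw [h1, h2, h3, ← mulVec_smul, ← mulVec_sub, ← mulVec_sub]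
    refine congrArg (fun v => P *ᵥ v) ?_
    funext i
    simp only [Pi.sub_apply, Pi.smul_apply, smul_eq_mul]
  -- initial condition
  have hgl₀ : (fun i => Real.sqrt (1 + l₀ * D i) * (Real.sqrt (1 + l₀ * D i))⁻¹)
      = fun _ => (1:ℝ) := by
    funext i
    exact mul_inv_cancel₀ (Real.sqrt_pos.mpr (hposD l₀ hl₀0 i)).ne'
  have hSl₀ : S l₀ = 1 := by
    rw [hNS l₀ hl₀0, hgl₀, diagonal_one, mul_one, hPP]
  have part1 : φ l₀ = x₀ := by
    rw [hφ l₀, hSl₀, one_mulVec]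
    abel
  refine ⟨part1, fun l hl => ?_⟩
  have hl0 : (0:ℝ) ≤ l := hl.1.le
  have hEq : φ =ᶠ[nhds l]
      (fun t => ∑ i, (w t i + g t i * z i) • (fun j => P j i)) := by
    filter_upwards [Ioo_mem_nhds hl.1 hl.2] with t ht
    rw [hφP t ht.1.le, aux_mulVec_eq_sum]
  have hD : HasDerivAt (fun t => ∑ i : Fin d, (w t i + g t i * z i) • (fun j => P j i))
      (∑ i : Fin d, ((1 + l * D i)⁻¹ * β i
            - (1 + l * D i)⁻¹ * D i * w l i
            - (1 / 2 : ℝ) * ((1 + l * D i)⁻¹ * D i * (g l i * z i))) • (fun j => P j i)) l := by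
    apply HasDerivAt.fun_sum
    intro i _
    refine HasDerivAt.smul_const ?_ _
    have hderiv := aux_deriv (D i) (a i) (β i) (z i) (Real.sqrt (1 + l₀ * D i)) l (hDnn i) hl0
    simp only [hwdef, hgdef]
    convert hderiv using 2 <;> ring
  rw [hRHS l hl0, aux_mulVec_eq_sum]
  exact hD.congr_of_eventuallyEq hEq
end

section
/- (Derivative of the bridge mean.) For every λ > 0 (and one-sidedly at λ = 0), the map λ ↦ μ_λ ∈ ℝ^d is differentiable with derivative d μ_λ / dλ = Σ_λ Hᵀ R⁻¹ (y − H μ_λ). -/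
open Matrix

section InvDeriv

attribute [local instance] Matrix.linftyOpNormedRing Matrix.linftyOpNormedAlgebra

private lemma hasDerivAt_inv_entry {d : ℕ} (S M : Matrix (Fin d) (Fin d) ℝ) {l : ℝ}
    (h : IsUnit (S + l • M)) (i j : Fin d) :
    HasDerivAt (fun t : ℝ => (S + t • M)⁻¹ i j)
      ((-((S + l • M)⁻¹ * M * (S + l • M)⁻¹)) i j) l := by
  letI : CompleteSpace (Matrix (Fin d) (Fin d) ℝ) := FiniteDimensional.complete ℝ _
  have hA : HasDerivAt (fun t : ℝ => S + t • M) M l := by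
    have := ((hasDerivAt_id l).smul_const M).const_add S
    rw [one_smul] at this
    exact this
  have hF := hasFDerivAt_ringInverse (𝕜 := ℝ) h.unit
  rw [h.unit_spec] at hF
  have hinv := hF.comp_hasDerivAt l hA
  have e1 : (↑h.unit⁻¹ : Matrix (Fin d) (Fin d) ℝ) = (S + l • M)⁻¹ := by
    have := Matrix.coe_units_inv h.unit
    rwa [h.unit_spec] at this
  have efun : (fun t : ℝ => Ring.inverse (S + t • M)) = fun t : ℝ => (S + t • M)⁻¹ := by
    funext t
    rw [Matrix.nonsing_inv_eq_ringInverse]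
  have hinv' : HasDerivAt (fun t : ℝ => (S + t • M)⁻¹)
      (-((S + l • M)⁻¹ * M * (S + l • M)⁻¹)) l := by
    rw [← efun]
    simp [e1, ContinuousLinearMap.mulLeftRight_apply, Function.comp, mul_assoc] at hinv ⊢
    exact hinv
  let e₀ : Matrix (Fin d) (Fin d) ℝ →ₗ[ℝ] ℝ :=
    { toFun := fun X => X i j, map_add' := fun _ _ => rfl, map_smul' := fun _ _ => rfl }
  have := (LinearMap.toContinuousLinearMap e₀).hasFDerivAt.comp_hasDerivAt l hinv'
  exact this

end InvDeriv

private lemma smul_posSemidef' {d : ℕ} {M : Matrix (Fin d) (Fin d) ℝ} (hM : M.PosSemidef)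
    {l : ℝ} (hl : 0 ≤ l) : (l • M).PosSemidef := by
  refine ⟨?_, fun x => ?_⟩
  · have := hM.1
    unfold Matrix.IsHermitian at this ⊢
    rw [conjTranspose_smul, this]
    simp
  · have h := mul_nonneg hl (hM.2 x)
    simp only [Finsupp.sum, Finset.mul_sum, Matrix.smul_apply, smul_eq_mul] at h ⊢
    convert h using 3 with i _ j _
    ring

/-- Derivative of the bridge mean: `λ ↦ μ_λ` is differentiable for `λ > 0` (and
one-sidedly, within `[0, ∞)`, at `λ = 0`) with derivative `Σ_λ Hᵀ R⁻¹ (y - H μ_λ)`. -/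
theorem stmt11 {d m : ℕ} (hd : 1 ≤ d) (hm : 1 ≤ m)
    (μ₀ : Fin d → ℝ) (Sig0 : Matrix (Fin d) (Fin d) ℝ) (hSig0 : Sig0.PosDef)
    (H : Matrix (Fin m) (Fin d) ℝ)
    (R : Matrix (Fin m) (Fin m) ℝ) (hR : R.PosDef)
    (y : Fin m → ℝ)
    (Sig : ℝ → Matrix (Fin d) (Fin d) ℝ)
    (hSig : ∀ l : ℝ, Sig l = (Sig0⁻¹ + l • (Hᵀ * R⁻¹ * H))⁻¹)
    (μ : ℝ → (Fin d → ℝ))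
    (hμ : ∀ l : ℝ, μ l = Sig l *ᵥ (Sig0⁻¹ *ᵥ μ₀ + l • ((Hᵀ * R⁻¹) *ᵥ y))) :
    (∀ l : ℝ, 0 < l →
        HasDerivAt μ (Sig l *ᵥ ((Hᵀ * R⁻¹) *ᵥ (y - H *ᵥ μ l))) l) ∧
      HasDerivWithinAt μ (Sig 0 *ᵥ ((Hᵀ * R⁻¹) *ᵥ (y - H *ᵥ μ 0))) (Set.Ici 0) 0 := by
  have hHt : Hᴴ = Hᵀ := by
    ext i j
    simp [conjTranspose_apply]
  have hMsd : (Hᵀ * R⁻¹ * H).PosSemidef := by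
    have h1 : (R⁻¹).PosSemidef := hR.posSemidef.inv
    have := h1.conjTranspose_mul_mul_same H
    rwa [hHt] at this
  have hUnit : ∀ l : ℝ, 0 ≤ l → IsUnit (Sig0⁻¹ + l • (Hᵀ * R⁻¹ * H)) := fun l hl =>
    (hSig0.inv.add_posSemidef (smul_posSemidef' hMsd hl)).isUnit
  have key : ∀ l : ℝ, 0 ≤ l →
      HasDerivAt μ (Sig l *ᵥ ((Hᵀ * R⁻¹) *ᵥ (y - H *ᵥ μ l))) l := by
    intro l hl
    have hu := hUnit l hl
    set M : Matrix (Fin d) (Fin d) ℝ := Hᵀ * R⁻¹ * H with hMdef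
    set b : Fin d → ℝ := Sig0⁻¹ *ᵥ μ₀ with hbdef
    set c : Fin d → ℝ := (Hᵀ * R⁻¹) *ᵥ y with hcdef
    have hvec : Sig l *ᵥ ((Hᵀ * R⁻¹) *ᵥ (y - H *ᵥ μ l)) =
        (-((Sig0⁻¹ + l • M)⁻¹ * M * (Sig0⁻¹ + l • M)⁻¹)) *ᵥ (b + l • c)
          + (Sig0⁻¹ + l • M)⁻¹ *ᵥ c := by
      have h₁ : (Hᵀ * R⁻¹) *ᵥ (y - H *ᵥ μ l) = c - M *ᵥ μ l := by
        rw [Matrix.mulVec_sub, Matrix.mulVec_mulVec, ← hMdef, ← hcdef]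
      rw [hSig l, h₁, hμ l, hSig l, Matrix.mulVec_sub, Matrix.mulVec_mulVec,
        Matrix.mulVec_mulVec, Matrix.mulVec_mulVec, Matrix.neg_mulVec]
      abel
    rw [hvec]
    have hμfun : μ = fun t => fun i =>
        ∑ j, (Sig0⁻¹ + t • M)⁻¹ i j * (b j + t * c j) := by
      funext t i
      rw [hμ t, hSig t]
      simp [Matrix.mulVec, dotProduct]
    rw [hμfun]
    apply hasDerivAt_pi.mpr
    intro i
    have hsum : HasDerivAt (fun t : ℝ => ∑ j, (Sig0⁻¹ + t • M)⁻¹ i j * (b j + t * c j))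
        (∑ j, ((-((Sig0⁻¹ + l • M)⁻¹ * M * (Sig0⁻¹ + l • M)⁻¹)) i j * (b j + l * c j)
          + (Sig0⁻¹ + l • M)⁻¹ i j * c j)) l := by
      apply HasDerivAt.fun_sum
      intro j _
      have h1 := hasDerivAt_inv_entry Sig0⁻¹ M hu i j
      have h2 : HasDerivAt (fun t : ℝ => b j + t * c j) (c j) l := by
        simpa using ((hasDerivAt_id l).mul_const (c j)).const_add (b j)
      exact h1.mul h2
    refine hsum.congr_deriv ?_
    simp only [Pi.add_apply, Matrix.mulVec, dotProduct, Finset.sum_add_distrib,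
      Pi.smul_apply, smul_eq_mul]
  exact ⟨fun l hl => key l hl.le, (key 0 le_rfl).hasDerivWithinAt⟩
end
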